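/- arXiv:2408.01652 — 5 statements merged into one kernel-verified Lean document; each statement's English description precedes it below -/
import Mathlib

section
/- Given a PFA P = (Q, Σ, Δ, I, F), define the DFA A over state set 2^Q with initial state I, accepting states {S ⊆ Q : S ∩ F ≠ ∅}, and transition δ(S, a) = {q : ∃ P' ⊆ S, (P', a, q) ∈ Δ}. Then for every string s, P accepts s if and only if A accepts s. -/
/-- A Parallelized Finite Automaton (PFA). -/
structure PFA (Q : Type*) (σ : Type*) where
  Δ : Set (Set Q × σ × Q)
  I : Set Q
  F : Set Q

namespace PFA

variable {Q σ : Type*} (M : PFA Q σ)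

/-- Existence of a run tree of `M` over `s` with root label `q`. -/
inductive RunTo (M : PFA Q σ) : List σ → Q → Prop where
  | leaf (q : Q) (h : q ∈ M.I) : RunTo M [] q
  | node (s : List σ) (a : σ) (q : Q) (P : Set Q) (h : (P, a, q) ∈ M.Δ)
      (child : ∀ p ∈ P, RunTo M s p) : RunTo M (s ++ [a]) q

/-- `M` accepts `s` iff some run tree over `s` has its root labeled by a final state. -/
def Accepts (s : List σ) : Prop := ∃ q ∈ M.F, M.RunTo s q

/-- The subset-construction DFA of a PFA: states are sets of PFA states,
initial state `I`, accepting states the sets meeting `F`, and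
`δ(S, a) = {q | ∃ P ⊆ S, (P, a, q) ∈ Δ}`. -/
def subsetDFA : DFA σ (Set Q) where
  step := fun S a => {q | ∃ P ⊆ S, (P, a, q) ∈ M.Δ}
  start := M.I
  accept := {S | (S ∩ M.F).Nonempty}

end PFA


theorem PFA.eval_eq {Q σ : Type*} (M : PFA Q σ) (s : List σ) :
    M.subsetDFA.eval s = {q | M.RunTo s q} := by
  induction s using List.reverseRecOn with
  | nil =>
    ext q
    simp only [DFA.eval_nil, Set.mem_setOf_eq]
    constructor
    · exact fun h => .leaf q h
    · intro h
      generalize hs : ([] : List σ) = s at h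
      cases h with
      | leaf q h => exact h
      | node s' a' q P hΔ child => exact absurd hs (by simp)
  | append_singleton t a ih =>
    ext q
    rw [DFA.eval_append_singleton, ih]
    simp only [PFA.subsetDFA, Set.mem_setOf_eq]
    constructor
    · rintro ⟨P, hP, hΔ⟩
      exact .node t a q P hΔ fun p hp => hP hp
    · intro h
      generalize hs : t ++ [a] = s at h
      cases h with
      | leaf q h => exact absurd hs (by simp)
      | node s' a' q P hΔ child =>
        obtain ⟨rfl, rfl⟩ : t = s' ∧ a = a' := by
          have := List.append_inj' hs rfl
          simpa using this
        exact ⟨P, fun p hp => child p hp, hΔ⟩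

/-- A PFA and its subset-construction DFA accept exactly the
same strings. -/
theorem pfa_subsetDFA_correct {Q σ : Type*} (M : PFA Q σ) (s : List σ) :
    M.Accepts s ↔ s ∈ M.subsetDFA.accepts := by
  constructor
  · rintro ⟨q, hF, hrun⟩
    refine ⟨q, ?_, hF⟩
    show q ∈ M.subsetDFA.eval s
    rw [PFA.eval_eq]; exact hrun
  · rintro ⟨q, hq, hF⟩
    have : q ∈ M.subsetDFA.eval s := hq
    rw [PFA.eval_eq] at this
    exact ⟨q, hF, this⟩
end

section
/- For every conjunctive query Q and database D (both viewed as bags), the bag semantics defined via tuple-homomorphisms coincides with the Chaudhuri–Vardi bag semantics: the multiset {{ Q(h_η(x̄)) : η a t-homomorphism from Q to D }} equals the bag in which each output tuple Q(ā) has multiplicity Σ_{h ∈ Hom(Q,D), h(x̄)=ā} Π_{i=0}^{m−1} mult_D(h(R_i(x̄_i))). -/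
/-- An atom of a conjunctive query: a relation name together with a list of
arguments which are variables or data values. -/
abbrev CQAtom (R V D : Type*) := R × List (V ⊕ D)

/-- A database fact: a relation name with a list of data values. -/
abbrev DBFact (R D : Type*) := R × List D

/-- A homomorphism maps variables to data values and is the identity on data
values; this applies it to an argument. -/
def applyH {V D : Type*} (h : V → D) : V ⊕ D → D := Sum.elim h id

/-- Application of a homomorphism to an atom. -/
def applyAtom {R V D : Type*} (h : V → D) (a : CQAtom R V D) : DBFact R D :=
  (a.1, a.2.map (applyH h))

lemma nat_card_sigma' {α : Type*} [Fintype α] (f : α → Type*) [∀ a, Finite (f a)] :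
    Nat.card (Σ a, f a) = ∑ a, Nat.card (f a) := by
  letI := fun a => Fintype.ofFinite (f a)
  simp [Nat.card_eq_fintype_card]

open Classical in
/-- For a CQ `Q` (a bag of `m` atoms, with head argument list
`head`) and a database `D` (a bag of facts indexed by `ι`), the bag semantics
via tuple-homomorphisms coincides with the Chaudhuri–Vardi bag semantics:
for every output tuple `out`, the number of t-homomorphisms `η` producing `out`
equals `Σ_{h ∈ Hom(Q,D), h(head) = out} Π_i mult_D(h(Q_i))`. -/
theorem bag_semantics_eq_chaudhuri_vardi
    {R V D ι : Type*} [Fintype V] [Fintype D] [DecidableEq V] [Fintype ι]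
    {m : ℕ} (Q : Fin m → CQAtom R V D) (Dt : ι → DBFact R D)
    (hvars : ∀ v : V, ∃ i, Sum.inl v ∈ (Q i).2)
    (head : List (V ⊕ D)) (out : List D) :
    Nat.card {η : Fin m → ι //
        ∃ h : V → D, (∀ i, applyAtom h (Q i) = Dt (η i)) ∧
          head.map (applyH h) = out}
      = ∑ h : V → D,
          if (∀ i, ∃ j, applyAtom h (Q i) = Dt j) ∧ head.map (applyH h) = out
          then ∏ i, Nat.card {j : ι // Dt j = applyAtom h (Q i)}
          else 0 := by
  classical
  -- uniqueness of the homomorphism witnessing a t-homomorphism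
  have hU : ∀ (η : Fin m → ι) (h h' : V → D),
      (∀ i, applyAtom h (Q i) = Dt (η i)) → (∀ i, applyAtom h' (Q i) = Dt (η i)) → h = h' := by
    intro η h h' hh hh'
    funext v
    obtain ⟨i, hv⟩ := hvars v
    have heq : (Q i).2.map (applyH h) = (Q i).2.map (applyH h') := by
      have := (hh i).trans (hh' i).symm
      simpa [applyAtom, Prod.ext_iff] using this
    have := List.map_eq_map_iff.mp heq (Sum.inl v) hv
    simpa [applyH] using this
  -- the fiber type over a fixed h
  set F : (V → D) → Type _ := fun h =>
    {η : Fin m → ι // (∀ i, applyAtom h (Q i) = Dt (η i)) ∧ head.map (applyH h) = out} with hF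
  -- the equivalence with the sigma type
  have e : {η : Fin m → ι //
      ∃ h : V → D, (∀ i, applyAtom h (Q i) = Dt (η i)) ∧ head.map (applyH h) = out}
      ≃ Σ h : V → D, F h :=
    { toFun := fun x => ⟨Classical.choose x.2, ⟨x.1, Classical.choose_spec x.2⟩⟩
      invFun := fun x => ⟨x.2.1, ⟨x.1, x.2.2⟩⟩
      left_inv := fun x => rfl
      right_inv := by
        rintro ⟨h, η, hη⟩
        have hex : ∃ h' : V → D, (∀ i, applyAtom h' (Q i) = Dt (η i)) ∧
            head.map (applyH h') = out := ⟨h, hη⟩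
        have : Classical.choose hex = h :=
          hU η _ _ (Classical.choose_spec hex).1 hη.1
        simp only [Sigma.mk.inj_iff]
        exact ⟨this, by subst this; rfl⟩ }
  rw [Nat.card_congr e, nat_card_sigma']
  refine Finset.sum_congr rfl fun h _ => ?_
  by_cases hhead : head.map (applyH h) = out
  · by_cases hall : ∀ i, ∃ j, applyAtom h (Q i) = Dt j
    · rw [if_pos ⟨hall, hhead⟩]
      have e2 : F h ≃ ∀ i, {j : ι // Dt j = applyAtom h (Q i)} :=
        { toFun := fun x i => ⟨x.1 i, (x.2.1 i).symm⟩
          invFun := fun g => ⟨fun i => (g i).1, ⟨fun i => ((g i).2).symm, hhead⟩⟩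
          left_inv := fun x => rfl
          right_inv := fun g => rfl }
      rw [Nat.card_congr e2, Nat.card_pi]
    · rw [if_neg (by tauto)]
      push_neg at hall
      obtain ⟨i, hi⟩ := hall
      have : IsEmpty (F h) := by
        constructor
        rintro ⟨η, hη, -⟩
        exact hi (η i) (hη i)
      simp [Nat.card_of_isEmpty]
  · rw [if_neg (by tauto)]
    have : IsEmpty (F h) := by
      constructor
      rintro ⟨η, -, hη⟩
      exact hhead hη
    simp [Nat.card_of_isEmpty]
end

section
/- A connected full conjunctive query Q is hierarchical if and only if there exists a q-tree for Q, i.e., a labeled tree τ: t → I(Q) ∪ vars(Q) such that every variable of Q labels exactly one inner node, every atom identifier labels exactly one leaf, and for each leaf labeled by atom i, the set of variable labels on the inner nodes of the root-to-leaf path equals exactly the set of variables of atom i. -/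
/-- `u` is a leaf of the tree `t` (a prefix-closed finite set of `ℕ`-strings):
its only descendant in `t` is itself. -/
def IsLeafIn (t : Finset (List ℕ)) (u : List ℕ) : Prop :=
  ∀ v ∈ t, u <+: v → v = u

/-- A q-tree for a CQ with atoms `0, …, m-1` whose variable sets are given by
`vars`: a finite prefix-closed tree of `ℕ`-strings with a labeling by atom
identifiers and variables, such that every variable labels exactly one inner
node, every atom identifier labels exactly one leaf, and for every leaf
labeled by atom `i`, the variables labeling the proper ancestors (the inner
nodes of the root-to-leaf path) are exactly the variables of atom `i`. -/
structure QTreeFor {m : ℕ} {V : Type*} (vars : Fin m → Finset V) where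
  t : Finset (List ℕ)
  root_mem : [] ∈ t
  prefix_closed : ∀ u ∈ t, ∀ v : List ℕ, v <+: u → v ∈ t
  label : List ℕ → Fin m ⊕ V
  var_unique : ∀ x : V, ∃! u, u ∈ t ∧ ¬ IsLeafIn t u ∧ label u = Sum.inr x
  atom_unique : ∀ i : Fin m, ∃! u, u ∈ t ∧ IsLeafIn t u ∧ label u = Sum.inl i
  path_vars : ∀ u ∈ t, ∀ i : Fin m, IsLeafIn t u → label u = Sum.inl i →
      ∀ x : V, x ∈ vars i ↔ ∃ v ∈ t, v ≠ u ∧ v <+: u ∧ label v = Sum.inr x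

/-- A CQ (given by the variable sets of its atoms) is hierarchical iff for all
variables `x, y`, the sets of atoms containing them are comparable or
disjoint. -/
def Hierarchical {m : ℕ} {V : Type*} (vars : Fin m → Finset V) : Prop :=
  ∀ x y : V,
    {i : Fin m | x ∈ vars i} ⊆ {i : Fin m | y ∈ vars i} ∨
    {i : Fin m | y ∈ vars i} ⊆ {i : Fin m | x ∈ vars i} ∨
    {i : Fin m | x ∈ vars i} ∩ {i : Fin m | y ∈ vars i} = ∅


/-!
If `T` is a q-tree, a variable `x` occurs in atom `i` exactly when the node labelled `x` is a
prefix of the leaf labelled `i`. Nodes on a common root-to-leaf path are comparable, so the atom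
sets of two variables are nested or disjoint.

Conversely, number atoms and variables injectively so that a variable occurring in strictly more
atoms gets a smaller number. The leaf of atom `i` is the increasing list of the numbers of its
variables followed by the number of `i`; the tree consists of all prefixes of these words, each
labelled by the owner of its last number. By hierarchy, in any atom containing `x` the variables
numbered at most the number of `x` are those whose atom sets contain that of `x`, so the prefix
ending at `x` does not depend on the atom, and `x` labels a single inner node.
-/

theorem List.exists_prefix_getLast?_eq {α : Type*} {l : List α} {a : α} (ha : a ∈ l) :
    ∃ p, p <+: l ∧ p.getLast? = some a := by
  obtain ⟨s, t, rfl⟩ := List.append_of_mem ha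
  exact ⟨s ++ [a], ⟨t, by simp⟩, by simp⟩

theorem List.SortedLT.mem_prefix_iff {α : Type*} [LinearOrder α] {l p : List α} {a b : α}
    (hl : l.SortedLT) (hp : p <+: l) (ha : p.getLast? = some a) :
    b ∈ p ↔ b ∈ l ∧ b ≤ a := by
  obtain ⟨q, rfl⟩ := hp
  obtain ⟨p, rfl⟩ := List.getLast?_eq_some_iff.1 ha
  rw [List.sortedLT_iff_pairwise, List.pairwise_append, List.pairwise_append] at hl
  obtain ⟨⟨-, -, hlt_a⟩, -, ha_lt⟩ := hl
  simp only [List.mem_append, List.mem_singleton] at hlt_a ha_lt ⊢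
  constructor
  · rintro (hb | rfl)
    · exact ⟨.inl (.inl hb), (hlt_a b hb a rfl).le⟩
    · exact ⟨.inl (.inr rfl), le_rfl⟩
  · rintro ⟨hb | hb, hba⟩
    · exact hb
    · exact absurd hba (ha_lt a (.inr rfl) b hb).not_ge

theorem exists_injective_lt_of_lt {α : Type*} [Finite α] (w : α → ℕ) :
    ∃ c : α → ℕ, Function.Injective c ∧ ∀ a b, w a < w b → c a < c b := by
  obtain ⟨N, ⟨e⟩⟩ := Finite.exists_equiv_fin α
  refine ⟨fun a => N * w a + e a, fun a b hab => e.injective (Fin.ext ?_), fun a b hlt => ?_⟩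
  · simpa [Nat.mul_add_mod, Nat.mod_eq_of_lt (e a).isLt, Nat.mod_eq_of_lt (e b).isLt]
      using congrArg (· % N) hab
  · calc N * w a + e a < N * (w a + 1) := by
          rw [mul_add_one]; exact Nat.add_lt_add_left (e a).isLt _
      _ ≤ N * w b := Nat.mul_le_mul_left N hlt
      _ ≤ N * w b + e b := Nat.le_add_right _ _

theorem not_isLeafIn_of_prefix {t : Finset (List ℕ)} {u v : List ℕ} (hv : v ∈ t)
    (huv : u <+: v) (hne : u ≠ v) : ¬ IsLeafIn t u :=
  fun hu => hne (hu v hv huv).symm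

namespace QTreeFor

variable {m : ℕ} {V : Type*} {vars : Fin m → Finset V} (T : QTreeFor vars)

noncomputable def varNode (x : V) : List ℕ := (T.var_unique x).exists.choose

noncomputable def leaf (i : Fin m) : List ℕ := (T.atom_unique i).exists.choose

theorem varNode_spec (x : V) :
    T.varNode x ∈ T.t ∧ ¬ IsLeafIn T.t (T.varNode x) ∧ T.label (T.varNode x) = .inr x :=
  (T.var_unique x).exists.choose_spec

theorem leaf_spec (i : Fin m) :
    T.leaf i ∈ T.t ∧ IsLeafIn T.t (T.leaf i) ∧ T.label (T.leaf i) = .inl i :=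
  (T.atom_unique i).exists.choose_spec

theorem mem_vars_iff_varNode_prefix_leaf {x : V} {i : Fin m} :
    x ∈ vars i ↔ T.varNode x <+: T.leaf i := by
  obtain ⟨hleaf_mem, hleaf, hleaf_label⟩ := T.leaf_spec i
  rw [T.path_vars _ hleaf_mem i hleaf hleaf_label x]
  constructor
  · rintro ⟨v, hv, hne, hpre, hlabel⟩
    have hv_inner := not_isLeafIn_of_prefix hleaf_mem hpre hne
    rwa [(T.var_unique x).unique ⟨hv, hv_inner, hlabel⟩ (T.varNode_spec x)] at hpre
  · intro hpre
    obtain ⟨hmem, -, hlabel⟩ := T.varNode_spec x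
    refine ⟨_, hmem, fun h => ?_, hpre, hlabel⟩
    rw [h, hleaf_label] at hlabel
    cases hlabel

theorem atoms_subset_of_varNode_prefix {x y : V} (h : T.varNode x <+: T.varNode y) :
    {i | y ∈ vars i} ⊆ {i | x ∈ vars i} := fun _ hi =>
  T.mem_vars_iff_varNode_prefix_leaf.2 (h.trans (T.mem_vars_iff_varNode_prefix_leaf.1 hi))

theorem hierarchical (T : QTreeFor vars) : Hierarchical vars := by
  intro x y
  by_cases hxy : ∃ i, x ∈ vars i ∧ y ∈ vars i
  · obtain ⟨i, hx, hy⟩ := hxy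
    rw [T.mem_vars_iff_varNode_prefix_leaf] at hx hy
    rcases List.prefix_or_prefix_of_prefix hx hy with h | h
    · exact .inr (.inl (T.atoms_subset_of_varNode_prefix h))
    · exact .inl (T.atoms_subset_of_varNode_prefix h)
  · exact .inr (.inr (Set.eq_empty_iff_forall_notMem.2 fun i hi => hxy ⟨i, hi⟩))

end QTreeFor

namespace CodeTree

noncomputable section

variable {m : ℕ} {V : Type*} (vars : Fin m → Finset V) (c : Fin m ⊕ V → ℕ)

def varCodes (i : Fin m) : List ℕ := ((vars i).image (c ∘ .inr)).sort

def leafWord (i : Fin m) : List ℕ := varCodes vars c i ++ [c (.inl i)]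

def codeTree : Finset (List ℕ) := Finset.univ.biUnion fun i => (leafWord vars c i).inits.toFinset

/-- The root is labelled by the atom `0`; it is an inner node, where only variable labels matter. -/
def codeLabel [NeZero m] (u : List ℕ) : Fin m ⊕ V :=
  u.getLast?.elim (.inl 0) (Function.invFun c)

def StrictAntiAtoms : Prop :=
  ∀ x y, {i | x ∈ vars i} ⊂ {i | y ∈ vars i} → c (.inr y) < c (.inr x)

variable {vars c} {i j : Fin m} {x : V} {u v : List ℕ}

theorem varCodes_sortedLT : (varCodes vars c i).SortedLT := Finset.sortedLT_sort _

theorem mem_varCodes {n : ℕ} : n ∈ varCodes vars c i ↔ ∃ x ∈ vars i, c (.inr x) = n := by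
  simp [varCodes]

theorem prefix_leafWord_iff :
    u <+: leafWord vars c i ↔ u = leafWord vars c i ∨ u <+: varCodes vars c i :=
  List.prefix_concat_iff

theorem prefix_varCodes_ne_leafWord (hu : u <+: varCodes vars c i) : u ≠ leafWord vars c i := by
  rintro rfl
  simpa [leafWord] using hu.length_le

theorem mem_codeTree : u ∈ codeTree vars c ↔ ∃ i, u <+: leafWord vars c i := by
  simp [codeTree]

theorem leafWord_mem_codeTree : leafWord vars c i ∈ codeTree vars c :=
  mem_codeTree.2 ⟨i, List.prefix_refl _⟩

theorem eq_of_leafWord_prefix (hc : Function.Injective c)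
    (h : leafWord vars c i <+: leafWord vars c j) : i = j := by
  rcases prefix_leafWord_iff.1 h with h | h
  · simpa [leafWord, hc.eq_iff] using congrArg List.getLast? h
  · obtain ⟨x, -, hx⟩ := mem_varCodes.1 (h.subset (List.mem_concat_self (a := c (.inl i))))
    cases hc hx

theorem isLeafIn_codeTree_iff (hc : Function.Injective c) (hu : u ∈ codeTree vars c) :
    IsLeafIn (codeTree vars c) u ↔ ∃ i, u = leafWord vars c i := by
  obtain ⟨i, hi⟩ := mem_codeTree.1 hu
  constructor
  · exact fun hl => ⟨i, (hl _ leafWord_mem_codeTree hi).symm⟩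
  · rintro ⟨i, rfl⟩ v hv hpre
    obtain ⟨j, hj⟩ := mem_codeTree.1 hv
    obtain rfl := eq_of_leafWord_prefix hc (hpre.trans hj)
    exact hj.eq_of_length (le_antisymm hj.length_le hpre.length_le)

theorem inner_codeTree_iff (hc : Function.Injective c) :
    u ∈ codeTree vars c ∧ ¬ IsLeafIn (codeTree vars c) u ↔
      ∃ i, u <+: varCodes vars c i := by
  constructor
  · rintro ⟨hu, hl⟩
    obtain ⟨i, hi⟩ := mem_codeTree.1 hu
    rcases prefix_leafWord_iff.1 hi with rfl | h
    · exact absurd ((isLeafIn_codeTree_iff hc hu).2 ⟨i, rfl⟩) hl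
    · exact ⟨i, h⟩
  · rintro ⟨i, h⟩
    have hw : u <+: leafWord vars c i := h.trans (List.prefix_append _ _)
    exact ⟨mem_codeTree.2 ⟨i, hw⟩,
      not_isLeafIn_of_prefix leafWord_mem_codeTree hw (prefix_varCodes_ne_leafWord h)⟩

theorem codeLabel_of_getLast? [NeZero m] (hc : Function.Injective c) {a : Fin m ⊕ V}
    (h : u.getLast? = some (c a)) : codeLabel c u = a := by
  simp [codeLabel, h, Function.leftInverse_invFun hc a]

theorem codeLabel_leafWord [NeZero m] (hc : Function.Injective c) :
    codeLabel c (leafWord vars c i) = .inl i :=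
  codeLabel_of_getLast? hc (by simp [leafWord])

theorem codeLabel_eq_inr_iff [NeZero m] (hc : Function.Injective c)
    (hu : u <+: varCodes vars c i) :
    codeLabel c u = .inr x ↔ u.getLast? = some (c (.inr x)) := by
  refine ⟨fun h => ?_, codeLabel_of_getLast? hc⟩
  cases hlast : u.getLast? with
  | none => simp [codeLabel, hlast] at h
  | some n =>
    obtain ⟨y, -, rfl⟩ := mem_varCodes.1 (hu.subset (List.mem_of_mem_getLast? hlast))
    rw [codeLabel_of_getLast? hc hlast] at h
    rw [h]

theorem mem_vars_of_getLast? (hc : Function.Injective c) (hu : u <+: varCodes vars c i)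
    (h : u.getLast? = some (c (.inr x))) : x ∈ vars i := by
  obtain ⟨y, hy, hxy⟩ := mem_varCodes.1 (hu.subset (List.mem_of_mem_getLast? h))
  rwa [← Sum.inr_injective (hc hxy)]

theorem eq_of_isLeafIn_codeLabel_eq_inl [NeZero m] (hc : Function.Injective c)
    (hu : u ∈ codeTree vars c) (hu_leaf : IsLeafIn (codeTree vars c) u)
    (hu_label : codeLabel c u = .inl i) : u = leafWord vars c i := by
  obtain ⟨j, rfl⟩ := (isLeafIn_codeTree_iff hc hu).1 hu_leaf
  rw [codeLabel_leafWord hc, Sum.inl.injEq] at hu_label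
  rw [hu_label]

theorem mem_vars_iff_exists_codeLabel [NeZero m] (hc : Function.Injective c) :
    x ∈ vars i ↔ ∃ v ∈ codeTree vars c,
      v ≠ leafWord vars c i ∧ v <+: leafWord vars c i ∧ codeLabel c v = .inr x := by
  constructor
  · intro hx
    obtain ⟨v, hv, hv_last⟩ := List.exists_prefix_getLast?_eq (mem_varCodes.2 ⟨x, hx, rfl⟩)
    have hvw : v <+: leafWord vars c i := hv.trans (List.prefix_append _ _)
    exact ⟨v, mem_codeTree.2 ⟨i, hvw⟩, prefix_varCodes_ne_leafWord hv, hvw,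
      codeLabel_of_getLast? hc hv_last⟩
  · rintro ⟨v, -, hne, hvw, hv_label⟩
    have hv := (prefix_leafWord_iff.1 hvw).resolve_left hne
    exact mem_vars_of_getLast? hc hv ((codeLabel_eq_inr_iff hc hv).1 hv_label)

end

end CodeTree

namespace Hierarchical

open CodeTree

variable {m : ℕ} {V : Type*} {vars : Fin m → Finset V} {c : Fin m ⊕ V → ℕ} {i j : Fin m}
  {x : V} {u v : List ℕ}

theorem atoms_subset_of_code_le (H : Hierarchical vars) (hanti : StrictAntiAtoms vars c)
    {y : V} (hx : x ∈ vars i) (hy : y ∈ vars i) (hle : c (.inr y) ≤ c (.inr x)) :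
    {j | x ∈ vars j} ⊆ {j | y ∈ vars j} := by
  rcases H x y with h | h | h
  · exact h
  · rcases h.eq_or_ssubset with h | h
    · exact h.ge
    · exact absurd (hanti y x h) hle.not_gt
  · exact (Set.eq_empty_iff_forall_notMem.1 h i ⟨hx, hy⟩).elim

theorem prefix_varCodes_unique (H : Hierarchical vars) (hc : Function.Injective c)
    (hanti : StrictAntiAtoms vars c) (hu : u <+: varCodes vars c i) (hv : v <+: varCodes vars c j)
    (hu_last : u.getLast? = some (c (.inr x))) (hv_last : v.getLast? = some (c (.inr x))) :
    u = v := by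
  have transfer : ∀ {i j}, x ∈ vars i → x ∈ vars j → ∀ n ∈ varCodes vars c i,
      n ≤ c (.inr x) → n ∈ varCodes vars c j := by
    intro i j hxi hxj n hn hle
    obtain ⟨y, hy, rfl⟩ := mem_varCodes.1 hn
    exact mem_varCodes.2 ⟨y, H.atoms_subset_of_code_le hanti hxi hy hle hxj, rfl⟩
  have hxi := mem_vars_of_getLast? hc hu hu_last
  have hxj := mem_vars_of_getLast? hc hv hv_last
  refine (varCodes_sortedLT.pairwise.sublist hu.sublist).sortedLT.eq_of_mem_iff
    (varCodes_sortedLT.pairwise.sublist hv.sublist).sortedLT fun n => ?_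
  rw [varCodes_sortedLT.mem_prefix_iff hu hu_last, varCodes_sortedLT.mem_prefix_iff hv hv_last]
  exact ⟨fun ⟨hn, hle⟩ => ⟨transfer hxi hxj n hn hle, hle⟩,
    fun ⟨hn, hle⟩ => ⟨transfer hxj hxi n hn hle, hle⟩⟩

theorem existsUnique_inner_codeLabel_eq_inr [NeZero m] (H : Hierarchical vars)
    (hc : Function.Injective c) (hanti : StrictAntiAtoms vars c) (hx : x ∈ vars i) :
    ∃! u, u ∈ codeTree vars c ∧ ¬ IsLeafIn (codeTree vars c) u ∧
      codeLabel c u = .inr x := by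
  obtain ⟨u, hu, hu_last⟩ := List.exists_prefix_getLast?_eq (mem_varCodes.2 ⟨x, hx, rfl⟩)
  obtain ⟨hu_mem, hu_inner⟩ := (inner_codeTree_iff hc).2 ⟨i, hu⟩
  refine ⟨u, ⟨hu_mem, hu_inner, codeLabel_of_getLast? hc hu_last⟩, ?_⟩
  rintro v ⟨hv_mem, hv_inner, hv_label⟩
  obtain ⟨j, hv⟩ := (inner_codeTree_iff hc).1 ⟨hv_mem, hv_inner⟩
  exact H.prefix_varCodes_unique hc hanti hv hu ((codeLabel_eq_inr_iff hc hv).1 hv_label)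
    hu_last

noncomputable def qTreeFor [NeZero m] (H : Hierarchical vars) (hc : Function.Injective c)
    (hanti : StrictAntiAtoms vars c) (hV : ∀ x : V, ∃ i, x ∈ vars i) : QTreeFor vars where
  t := codeTree vars c
  root_mem := mem_codeTree.2 ⟨0, List.nil_prefix⟩
  prefix_closed u hu v hv :=
    let ⟨i, hi⟩ := mem_codeTree.1 hu
    mem_codeTree.2 ⟨i, hv.trans hi⟩
  label := codeLabel c
  var_unique x :=
    let ⟨_, hx⟩ := hV x
    H.existsUnique_inner_codeLabel_eq_inr hc hanti hx
  atom_unique i :=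
    ⟨leafWord vars c i, ⟨leafWord_mem_codeTree,
      (isLeafIn_codeTree_iff hc leafWord_mem_codeTree).2 ⟨i, rfl⟩, codeLabel_leafWord hc⟩,
      fun _ ⟨hv, hv_leaf, hv_label⟩ => eq_of_isLeafIn_codeLabel_eq_inl hc hv hv_leaf hv_label⟩
  path_vars u hu i hu_leaf hu_label x := by
    rw [eq_of_isLeafIn_codeLabel_eq_inl hc hu hu_leaf hu_label]
    exact mem_vars_iff_exists_codeLabel hc

end Hierarchical

/-- A connected full CQ (every variable of type `V` occurs in
some atom, and some variable occurs in every atom) is hierarchical if and only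
if it has a q-tree. -/
theorem hierarchical_iff_qtree {m : ℕ} {V : Type*}
    (vars : Fin m → Finset V)
    (hconn : ∃ x : V, ∀ i, x ∈ vars i)
    (hV : ∀ x : V, ∃ i, x ∈ vars i) :
    Hierarchical vars ↔ Nonempty (QTreeFor vars) := by
  obtain ⟨x₀, -⟩ := hconn
  obtain ⟨i₀, -⟩ := hV x₀
  have : NeZero m := ⟨i₀.pos.ne'⟩
  have : Finite V := Finite.of_surjective (fun p : Σ i, vars i => (p.2 : V))
    fun x => let ⟨i, hi⟩ := hV x; ⟨⟨i, x, hi⟩, rfl⟩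
  refine ⟨fun H => ?_, fun ⟨T⟩ => T.hierarchical⟩
  obtain ⟨c, hc, hlt⟩ := exists_injective_lt_of_lt
    (Sum.elim (fun _ => 0) fun x => {i | x ∉ vars i}.ncard : Fin m ⊕ V → ℕ)
  exact ⟨H.qTreeFor hc (fun x y hxy => hlt (.inr y) (.inr x)
    (Set.ncard_lt_ncard (compl_lt_compl_iff_lt.2 hxy))) hV⟩
end

section
/- Let Q be a hierarchical connected full CQ with q-tree τ_Q. For any atom S(ȳ) of Q and any variable x of Q with x ∉ {ȳ}, the set of variables shared with S(ȳ) is the same for all atoms below x in the q-tree: for every pair of distinct atom identifiers i, j that are descendants of x in τ_Q, {ȳ} ∩ {x̄_i} = {ȳ} ∩ {x̄_j}. -/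
theorem QTreeFor.mem_vars_of_isPrefix {m : ℕ} {V : Type*} {vars : Fin m → Finset V}
    (qt : QTreeFor vars) {ux u : List ℕ} {x : V} {i : Fin m}
    (hux : ux ∈ qt.t) (hlx : qt.label ux = Sum.inr x)
    (hu : u ∈ qt.t) (hleaf : IsLeafIn qt.t u) (hlab : qt.label u = Sum.inl i)
    (hdesc : ux <+: u) : x ∈ vars i := by
  have hne : ux ≠ u := by
    rintro rfl
    exact Sum.inl_ne_inr (hlab.symm.trans hlx)
  exact (qt.path_vars u hu i hleaf hlab x).mpr ⟨ux, hux, hne, hdesc, hlx⟩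

theorem Hierarchical.mem_vars_of_mem_vars {m : ℕ} {V : Type*} {vars : Fin m → Finset V}
    (hH : Hierarchical vars) {j a b : Fin m} {x y : V} (hx : x ∉ vars j) (hyj : y ∈ vars j)
    (hxa : x ∈ vars a) (hya : y ∈ vars a) (hxb : x ∈ vars b) : y ∈ vars b := by
  rcases hH x y with hsub | hsub | hdisj
  · exact hsub hxb
  · exact absurd (hsub hyj) hx
  · exact absurd (hdisj.subset ⟨hxa, hya⟩) (Set.notMem_empty a)

theorem Hierarchical.inter_vars_eq {m : ℕ} {V : Type*} [DecidableEq V] {vars : Fin m → Finset V}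
    (hH : Hierarchical vars) {j a b : Fin m} {x : V} (hx : x ∉ vars j)
    (hxa : x ∈ vars a) (hxb : x ∈ vars b) : vars j ∩ vars a = vars j ∩ vars b := by
  ext y
  simp only [Finset.mem_inter, and_congr_right_iff]
  exact fun hyj => ⟨fun hya => hH.mem_vars_of_mem_vars hx hyj hxa hya hxb,
    fun hyb => hH.mem_vars_of_mem_vars hx hyj hxb hyb hxa⟩

theorem shared_vars_constant_below_general {m : ℕ} {V : Type*} [DecidableEq V]
    (vars : Fin m → Finset V)
    (hH : Hierarchical vars)
    (qt : QTreeFor vars)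
    (j : Fin m) (x : V) (hx : x ∉ vars j)
    (i₁ i₂ : Fin m)
    (ux u₁ u₂ : List ℕ)
    (hux : ux ∈ qt.t) (hlx : qt.label ux = Sum.inr x)
    (hu₁ : u₁ ∈ qt.t) (hleaf₁ : IsLeafIn qt.t u₁)
    (hlab₁ : qt.label u₁ = Sum.inl i₁) (hdesc₁ : ux <+: u₁)
    (hu₂ : u₂ ∈ qt.t) (hleaf₂ : IsLeafIn qt.t u₂)
    (hlab₂ : qt.label u₂ = Sum.inl i₂) (hdesc₂ : ux <+: u₂) :
    vars j ∩ vars i₁ = vars j ∩ vars i₂ :=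
  hH.inter_vars_eq hx (qt.mem_vars_of_isPrefix hux hlx hu₁ hleaf₁ hlab₁ hdesc₁)
    (qt.mem_vars_of_isPrefix hux hlx hu₂ hleaf₂ hlab₂ hdesc₂)

/-- Let `Q` be a hierarchical connected full CQ with q-tree
`qt`, let `j` be an atom of `Q` and `x` a variable not occurring in atom `j`.
Then all atoms whose leaves lie below the node labeled `x` share the same
variables with atom `j`. -/
theorem shared_vars_constant_below {m : ℕ} {V : Type*} [DecidableEq V]
    (vars : Fin m → Finset V)
    (hH : Hierarchical vars)
    (hconn : ∃ x : V, ∀ i, x ∈ vars i)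
    (hV : ∀ x : V, ∃ i, x ∈ vars i)
    (qt : QTreeFor vars)
    (j : Fin m) (x : V) (hx : x ∉ vars j)
    (i₁ i₂ : Fin m) (hne : i₁ ≠ i₂)
    (ux u₁ u₂ : List ℕ)
    (hux : ux ∈ qt.t) (hlx : qt.label ux = Sum.inr x)
    (hu₁ : u₁ ∈ qt.t) (hleaf₁ : IsLeafIn qt.t u₁)
    (hlab₁ : qt.label u₁ = Sum.inl i₁) (hdesc₁ : ux <+: u₁)
    (hu₂ : u₂ ∈ qt.t) (hleaf₂ : IsLeafIn qt.t u₂)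
    (hlab₂ : qt.label u₂ = Sum.inl i₂) (hdesc₂ : ux <+: u₂) :
    vars j ∩ vars i₁ = vars j ∩ vars i₂ :=
  shared_vars_constant_below_general vars hH qt j x hx i₁ i₂ ux u₁ u₂ hux hlx hu₁ hleaf₁ hlab₁
    hdesc₁ hu₂ hleaf₂ hlab₂ hdesc₂
end

section
/- Let A be a set of atoms all with the same relation name R of arity n, where atom i has variable tuple x̄_i. Define the relation H on positions [1,n]² by (k₁,k₂) ∈ H iff there exist atoms i, j ∈ A with x̄_i[k₁] = x̄_j[k₂], let H^T be its transitive closure, and let t_A = R([1],…,[n]) be the atom whose k-th argument is the H^T-equivalence class of k. Then for every tuple t = R(ā): there exists a homomorphism h with h(x̄_i) = ā for every i ∈ A, if and only if there exists a homomorphism h' with h'(t_A) = t. -/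
/-- Let `A` be a nonempty set of atoms (indexed by `ι`), all
with the same relation name of arity `n`, atom `i` having variable tuple
`args i`.  Let `H` relate positions `k₁, k₂` iff some two atoms have the same
variable at positions `k₁` and `k₂` respectively, and let `t_A` be the atom
whose `k`-th argument is the equivalence class of `k` under the transitive
closure of `H` (realized by the quotient `Quot`).  Then a tuple `a` is a
common homomorphic image of all atoms of `A` iff it is a homomorphic image of
the single atom `t_A`. -/
theorem single_atom_for_self_join {V D ι : Type*} [Nonempty D] [Nonempty ι]
    {n : ℕ} (args : ι → Fin n → V) (a : Fin n → D) :
    (∃ h : V → D, ∀ i k, h (args i k) = a k) ↔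
    (∃ h' : Quot (fun k₁ k₂ : Fin n => ∃ i j, args i k₁ = args j k₂) → D,
      ∀ k, h' (Quot.mk _ k) = a k) := by
  constructor
  · rintro ⟨h, hh⟩
    refine ⟨Quot.lift a ?_, fun k => rfl⟩
    rintro k₁ k₂ ⟨i, j, hij⟩
    calc a k₁ = h (args i k₁) := (hh i k₁).symm
      _ = h (args j k₂) := by rw [hij]
      _ = a k₂ := hh j k₂
  · rintro ⟨h', hh'⟩
    classical
    refine ⟨fun v => if hv : ∃ p : ι × Fin n, args p.1 p.2 = v
        then a hv.choose.2 else Classical.arbitrary D, fun i k => ?_⟩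
    have hv : ∃ p : ι × Fin n, args p.1 p.2 = args i k := ⟨(i, k), rfl⟩
    simp only []
    rw [dif_pos hv]
    have hq : Quot.mk (fun k₁ k₂ : Fin n => ∃ i j, args i k₁ = args j k₂)
        hv.choose.2 = Quot.mk _ k :=
      Quot.sound ⟨hv.choose.1, i, hv.choose_spec⟩
    have := congrArg h' hq
    rwa [hh', hh'] at this
end
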